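/- arXiv:2506.20573 — 3 statements merged into one kernel-verified Lean document; each statement's English description precedes it below -/
import Mathlib

section
/- Consider the Huber estimator on the Bernoulli(p₁) limit distribution on {0,1}: for δ = 2 (effectively squared loss), the estimate is θ̂₂ = p₁; for δ = 0 (absolute loss), θ̂₀ = 1 if p₁ > 1/2 and θ̂₀ = 0 if p₁ < 1/2; and for δ = 1/4, θ̂_{1/4} = 1 − (1−p₁)/(4p₁) if p₁ > 1/2 and θ̂_{1/4} = p₁/(4(1−p₁)) if p₁ ≤ 1/2. Then for every p₁ ∈ [0,1] and every θ ∈ {(1−ε)/2, (1+ε)/2} with 0 ≤ ε < 1/2, the maximum of (θ̂₀ − θ)², (θ̂_{1/4} − θ)², (θ̂₂ − θ)² is at least a universal positive constant (e.g. ≥ 1/100). -/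
noncomputable def berHuber0 (p : ℝ) : ℝ := if 1 / 2 < p then 1 else 0

noncomputable def berHuberQuarter (p : ℝ) : ℝ :=
  if 1 / 2 < p then 1 - (1 - p) / (4 * p) else p / (4 * (1 - p))

noncomputable def berHuber2 (p : ℝ) : ℝ := p

theorem bernoulli_hardness (p₁ ε θ : ℝ)
    (hp₀ : 0 ≤ p₁) (hp₁ : p₁ ≤ 1) (hε₀ : 0 ≤ ε) (hε₁ : ε < 1 / 2)
    (hθ : θ = (1 - ε) / 2 ∨ θ = (1 + ε) / 2) :
    (1 : ℝ) / 100 ≤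
      max (max ((berHuber0 p₁ - θ) ^ 2) ((berHuberQuarter p₁ - θ) ^ 2))
        ((berHuber2 p₁ - θ) ^ 2) := by
  have hθlo : 1 / 4 < θ := by rcases hθ with h | h <;> rw [h] <;> linarith
  have hθhi : θ < 3 / 4 := by rcases hθ with h | h <;> rw [h] <;> linarith
  have key : (1 : ℝ) / 100 ≤ (berHuber0 p₁ - θ) ^ 2 := by
    unfold berHuber0
    split <;> nlinarith
  exact key.trans ((le_max_left _ _).trans (le_max_left _ _))
end

section
/- For the Bernoulli population Huber estimator with δ = 1/4 on Bernoulli(p₁): the estimate θ̂_{1/4} = p₁/(4(1−p₁)) for p₁ ≤ 1/2 satisfies θ̂_{1/4} ≤ 1/4, and the estimate θ̂_{1/4} = 1 − (1−p₁)/(4p₁) for p₁ > 1/2 satisfies θ̂_{1/4} ≥ 3/4. In particular θ̂_{1/4} is never in the open interval (1/4, 3/4). -/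
theorem bernoulli_quarter_huber_gap (p₁ : ℝ) (hp₀ : 0 ≤ p₁) (hp₁ : p₁ ≤ 1) :
    (p₁ ≤ 1 / 2 → p₁ / (4 * (1 - p₁)) ≤ 1 / 4) ∧
    (1 / 2 < p₁ → 3 / 4 ≤ 1 - (1 - p₁) / (4 * p₁)) := by
  constructor
  · intro h
    have h1 : 0 < 4 * (1 - p₁) := by linarith
    rw [div_le_div_iff₀ h1 (by norm_num)]
    linarith
  · intro h
    have h1 : 0 < 4 * p₁ := by linarith
    have : (1 - p₁) / (4 * p₁) ≤ 1 / 4 := by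
      rw [div_le_div_iff₀ h1 (by norm_num)]
      linarith
    linarith
end

section
/- Let δ_1 ≤ δ_2 ≤ … ≤ δ_N be nonnegative reals with N ≥ 2, let R: ℝ → ℝ be L-Lipschitz (L > 0), C > 0, α ≥ 1, and suppose n ≥ ( L·N/(C(N−1)) · (δ_N² − δ_1²) )^{1/α}. Define risks r_i = K + δ_i² for a constant K ≥ 0, individual utilities U_spec^(i) = R(r_i) − C·n^α, and shared utilities U_agn^(i) = R(r_N) − p_i for payments p_i proportional to C·n^α − L(δ_N² − δ_i²) with ∑ p_i = C·n^α. Then U_agn^(i) ≥ U_spec^(i) for all i = 1, …, N. -/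
set_option maxHeartbeats 1000000 in
theorem mean_estimation_incentive (N : ℕ) (hN : 2 ≤ N) (δ : ℕ → ℝ)
    (hδ0 : ∀ i, 1 ≤ i → i ≤ N → 0 ≤ δ i)
    (hmono : ∀ i j, 1 ≤ i → i ≤ j → j ≤ N → δ i ≤ δ j)
    (R : ℝ → ℝ) (L : ℝ) (hL : 0 < L)
    (hlip : ∀ x y : ℝ, |R x - R y| ≤ L * |x - y|)
    (C α n K : ℝ) (hC : 0 < C) (hα : 1 ≤ α) (hK : 0 ≤ K)
    (hn : n ≥ (L * N / (C * ((N : ℝ) - 1)) * (δ N ^ 2 - δ 1 ^ 2)) ^ (1 / α))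
    (p : ℕ → ℝ) (t : ℝ)
    (hp : ∀ i, 1 ≤ i → i ≤ N →
      p i = t * (C * n ^ α - L * (δ N ^ 2 - δ i ^ 2)))
    (hpsum : ∑ i ∈ Finset.Icc 1 N, p i = C * n ^ α) :
    ∀ i, 1 ≤ i → i ≤ N →
      R (K + δ i ^ 2) - C * n ^ α ≤ R (K + δ N ^ 2) - p i := by
  intro i h1i hiN
  have hN1 : (1:ℝ) ≤ (N:ℝ) - 1 := by
    have : (2:ℝ) ≤ (N:ℝ) := by exact_mod_cast hN
    linarith
  have hNpos : (0:ℝ) < (N:ℝ) := by linarith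
  have h1N : 1 ≤ N := by omega
  have hδ1N : δ 1 ≤ δ N := hmono 1 N le_rfl h1N le_rfl
  have hδ1 : 0 ≤ δ 1 := hδ0 1 le_rfl h1N
  have hδ1i : δ 1 ≤ δ i := hmono 1 i le_rfl h1i hiN
  have hδiN : δ i ≤ δ N := hmono i N h1i hiN le_rfl
  have hsq1N : δ 1 ^ 2 ≤ δ N ^ 2 := by nlinarith
  have hsq1i : δ 1 ^ 2 ≤ δ i ^ 2 := by nlinarith
  have hsqiN : δ i ^ 2 ≤ δ N ^ 2 := by nlinarith
  have hCN : (0:ℝ) < C * ((N:ℝ) - 1) := by positivity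
  set b := L * (N:ℝ) / (C * ((N:ℝ) - 1)) * (δ N ^ 2 - δ 1 ^ 2) with hb
  have hbnn : 0 ≤ b := by
    apply mul_nonneg
    · positivity
    · linarith
  have hαpos : 0 < α := lt_of_lt_of_le one_pos hα
  have hn0 : 0 ≤ n := le_trans (Real.rpow_nonneg hbnn _) hn
  have hnab : b ≤ n ^ α := by
    have h1 : b = (b ^ (1 / α)) ^ α := by
      rw [← Real.rpow_mul hbnn, one_div, inv_mul_cancel₀ hαpos.ne', Real.rpow_one]
    rw [h1]
    exact Real.rpow_le_rpow (Real.rpow_nonneg hbnn _) hn hαpos.le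
  set A := C * n ^ α with hA
  have hA0 : 0 ≤ A := mul_nonneg hC.le (Real.rpow_nonneg hn0 α)
  have hkey : L * (N:ℝ) * (δ N ^ 2 - δ 1 ^ 2) ≤ ((N:ℝ) - 1) * A := by
    have h1 : C * ((N:ℝ) - 1) * b ≤ C * ((N:ℝ) - 1) * n ^ α :=
      mul_le_mul_of_nonneg_left hnab hCN.le
    have h2 : C * ((N:ℝ) - 1) * b = L * (N:ℝ) * (δ N ^ 2 - δ 1 ^ 2) := by
      rw [hb]; field_simp
    rw [h2] at h1
    calc L * (N:ℝ) * (δ N ^ 2 - δ 1 ^ 2) ≤ C * ((N:ℝ) - 1) * n ^ α := h1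
      _ = ((N:ℝ) - 1) * A := by rw [hA]; ring
  -- each term nonneg
  have hDle : ∀ j, 1 ≤ j → j ≤ N → L * (δ N ^ 2 - δ j ^ 2) ≤ L * (δ N ^ 2 - δ 1 ^ 2) := by
    intro j hj1 hjN
    have h := hmono 1 j le_rfl hj1 hjN
    have hsqj : δ 1 ^ 2 ≤ δ j ^ 2 := by nlinarith
    nlinarith
  have hD1A : L * (δ N ^ 2 - δ 1 ^ 2) ≤ A := by
    by_contra hcon
    push_neg at hcon
    have h1 : ((N:ℝ) - 1) * A ≤ ((N:ℝ) - 1) * (L * (δ N ^ 2 - δ 1 ^ 2)) :=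
      mul_le_mul_of_nonneg_left hcon.le (by linarith)
    linarith
  have hXnn : ∀ j, 1 ≤ j → j ≤ N → 0 ≤ A - L * (δ N ^ 2 - δ j ^ 2) := by
    intro j hj1 hjN
    linarith [hDle j hj1 hjN]
  -- sum
  set S := ∑ j ∈ Finset.Icc 1 N, (A - L * (δ N ^ 2 - δ j ^ 2)) with hS
  have htS : t * S = A := by
    rw [← hpsum, hS, Finset.mul_sum]
    apply Finset.sum_congr rfl
    intro j hj
    rw [Finset.mem_Icc] at hj
    rw [hp j hj.1 hj.2]
  have hSA : A ≤ S := by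
    have h1 : ∀ j ∈ Finset.Icc 1 N, A - L * (δ N ^ 2 - δ 1 ^ 2) ≤ A - L * (δ N ^ 2 - δ j ^ 2) := by
      intro j hj
      rw [Finset.mem_Icc] at hj
      have := hDle j hj.1 hj.2
      linarith
    have h2 : (N:ℝ) * (A - L * (δ N ^ 2 - δ 1 ^ 2)) ≤ S := by
      have := Finset.sum_le_sum h1
      rwa [Finset.sum_const, Nat.card_Icc, Nat.add_sub_cancel, nsmul_eq_mul] at this
    have h3 : (N:ℝ) * (A - L * (δ N ^ 2 - δ 1 ^ 2))
        = (N:ℝ) * A - L * (N:ℝ) * (δ N ^ 2 - δ 1 ^ 2) := by ring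
    linarith
  clear_value S
  clear_value A
  -- p i ≤ A - D i
  have hpi : p i ≤ A - L * (δ N ^ 2 - δ i ^ 2) := by
    rw [hp i h1i hiN]
    rcases eq_or_lt_of_le hA0 with hA0' | hApos
    · have hD1nn : 0 ≤ L * (δ N ^ 2 - δ 1 ^ 2) := mul_nonneg hL.le (by linarith)
      have hND1 : (N:ℝ) * (L * (δ N ^ 2 - δ 1 ^ 2)) = 0 :=
        le_antisymm (by nlinarith) (mul_nonneg hNpos.le hD1nn)
      have hD1 : L * (δ N ^ 2 - δ 1 ^ 2) = 0 := by
        rcases mul_eq_zero.mp hND1 with h | h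
        · exact absurd h hNpos.ne'
        · exact h
      have hDi0 : L * (δ N ^ 2 - δ i ^ 2) = 0 :=
        le_antisymm (by linarith [hDle i h1i hiN]) (mul_nonneg hL.le (by linarith))
      rw [← hA0', hDi0]; norm_num
    · have hSpos : 0 < S := lt_of_lt_of_le hApos hSA
      have ht1 : t ≤ 1 := by
        by_contra hcon
        push_neg at hcon
        have h4 := mul_lt_mul_of_pos_right hcon hSpos
        rw [one_mul, htS] at h4
        linarith
      exact mul_le_of_le_one_left (hXnn i h1i hiN) ht1
  -- Lipschitz step
  have hl := hlip (K + δ i ^ 2) (K + δ N ^ 2)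
  have habs : |K + δ i ^ 2 - (K + δ N ^ 2)| = δ N ^ 2 - δ i ^ 2 := by
    rw [abs_of_nonpos (by linarith)]; ring
  rw [habs] at hl
  have h3 : R (K + δ i ^ 2) - R (K + δ N ^ 2) ≤ L * (δ N ^ 2 - δ i ^ 2) :=
    le_trans (le_abs_self _) hl
  linarith
end
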